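/- arXiv:2004.08877 — 6 statements merged into one kernel-verified Lean document; each statement's English description precedes it below -/
import Mathlib

section
/- Let K be ℝ or ℂ and let ε ∈ K[[x,t]] lie in the ideal (t²). If y₁, y₂ ∈ K[[x,t]] satisfy x·y₁² = (x + t + ε)·y₂², then y₁ = 0 and y₂ = 0. -/
/-!
Let `A = x + t + ε`. Since `ε ∈ (t²)`, the coefficient of `t` in `A` is `1`, so the prime `x`
does not divide `A`. From `x y₁² = A y₂²` primality of `x` forces `x ∣ y₂`, then `x ∣ y₁`, and
`(y₁ / x, y₂ / x)` solves the same equation: infinite descent puts `(y₁, y₂)` in every power of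
the ideal `(x)`, whose intersection in `K[[x,t]]` is zero.
-/

open MvPowerSeries

theorem Prime.dvd_and_dvd_of_mul_sq_eq {M : Type*} [CommMonoidWithZero M] [IsCancelMulZero M]
    {p a y₁ y₂ : M} (hp : Prime p) (ha : ¬p ∣ a) (h : p * y₁ ^ 2 = a * y₂ ^ 2) :
    ∃ z₁ z₂, y₁ = p * z₁ ∧ y₂ = p * z₂ ∧ p * z₁ ^ 2 = a * z₂ ^ 2 := by
  obtain ⟨z₂, rfl⟩ : p ∣ y₂ :=
    hp.dvd_of_dvd_pow ((hp.dvd_or_dvd ⟨_, h.symm⟩).resolve_left ha)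
  have hy₁ : y₁ ^ 2 = p * (a * z₂ ^ 2) :=
    mul_left_cancel₀ hp.ne_zero (by rw [h, mul_pow, sq p]; ac_rfl)
  obtain ⟨z₁, rfl⟩ : p ∣ y₁ := hp.dvd_of_dvd_pow ⟨_, hy₁⟩
  refine ⟨z₁, z₂, rfl, rfl, mul_left_cancel₀ hp.ne_zero ?_⟩
  rw [← hy₁, mul_pow, sq p]
  ac_rfl

theorem Prime.pow_dvd_and_pow_dvd_of_mul_sq_eq {M : Type*} [CommMonoidWithZero M]
    [IsCancelMulZero M]
    {p a y₁ y₂ : M} (hp : Prime p) (ha : ¬p ∣ a) (h : p * y₁ ^ 2 = a * y₂ ^ 2) (n : ℕ) :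
    p ^ n ∣ y₁ ∧ p ^ n ∣ y₂ := by
  induction n generalizing y₁ y₂ with
  | zero => simp
  | succ n ih =>
    obtain ⟨z₁, z₂, rfl, rfl, hz⟩ := hp.dvd_and_dvd_of_mul_sq_eq ha h
    obtain ⟨h₁, h₂⟩ := ih hz
    rw [pow_succ']
    exact ⟨mul_dvd_mul_left p h₁, mul_dvd_mul_left p h₂⟩

namespace MvPowerSeries

theorem eq_zero_of_forall_X_pow_dvd {σ R : Type*} [Semiring R] {s : σ}
    {φ : MvPowerSeries σ R} (h : ∀ n, X s ^ n ∣ φ) : φ = 0 := by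
  ext m
  exact X_pow_dvd_iff.mp (h (m s + 1)) m (Nat.lt_succ_self _)

theorem X_zero_prime {R : Type*} [CommRing R] [IsDomain R] {n : ℕ} :
    Prime (X 0 : MvPowerSeries (Fin (n + 1)) R) := by
  have : IsDomain (MvPowerSeries (Fin n) R) := NoZeroDivisors.to_isDomain _
  rw [← MulEquiv.prime_iff (finSuccEquiv R n), finSuccEquiv_X_zero]
  exact PowerSeries.X_prime

theorem not_X_dvd_X_add_X_add {σ R : Type*} [CommSemiring R] [Nontrivial R] {s t : σ}
    (hst : s ≠ t) {ε : MvPowerSeries σ R} (hε : X t ^ 2 ∣ ε) :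
    ¬X s ∣ X s + X t + ε := by
  classical
  rw [X_dvd_iff]
  intro h
  have hε₀ := X_pow_dvd_iff.mp hε (Finsupp.single t 1) (by simp)
  simpa [coeff_X, hst.symm, Finsupp.single_eq_single_iff, hε₀] using
    h (Finsupp.single t 1) (by simp [hst])

end MvPowerSeries

/-- In K[[x,t]] (K = ℝ or ℂ), if ε ∈ (t)² and x·y₁² = (x+t+ε)·y₂²
then y₁ = y₂ = 0. -/
theorem stmt_1 (K : Type*) [RCLike K]
    (ε : MvPowerSeries (Fin 2) K)
    (hε : ε ∈ (Ideal.span {(MvPowerSeries.X 1 : MvPowerSeries (Fin 2) K)}) ^ 2)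
    (y₁ y₂ : MvPowerSeries (Fin 2) K)
    (h : MvPowerSeries.X 0 * y₁ ^ 2
        = (MvPowerSeries.X 0 + MvPowerSeries.X 1 + ε) * y₂ ^ 2) :
    y₁ = 0 ∧ y₂ = 0 := by
  rw [Ideal.span_singleton_pow, Ideal.mem_span_singleton] at hε
  have hdesc := (X_zero_prime (R := K) (n := 1)).pow_dvd_and_pow_dvd_of_mul_sq_eq
    (not_X_dvd_X_add_X_add (by decide) hε) h
  exact ⟨eq_zero_of_forall_X_pow_dvd fun n ↦ (hdesc n).1,
    eq_zero_of_forall_X_pow_dvd fun n ↦ (hdesc n).2⟩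
end

section
/- Let a_n be the coefficients of the formal power series √(1+t) = 1 + ∑_{n≥1} a_n tⁿ (the unique power series with square 1+t and constant term 1). For every natural number c, setting y₁ = x^c + ∑_{n=1}^{c} a_n x^{c-n} tⁿ and y₂ = x^c in the polynomial ring K[x,t], one has x·y₁² − (x+t)·y₂² ∈ (t)^{c+1}. -/
open Finset

/-- with a_n the coefficients of √(1+t) (the unique power series g with
g² = 1+t and g(0) = 1), setting y₁ = x^c + ∑_{n=1}^c a_n x^{c-n} tⁿ and y₂ = x^c in
K[x,t], one has x·y₁² − (x+t)·y₂² ∈ (t)^{c+1}. -/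
theorem stmt_2 (K : Type*) [Field K] [CharZero K]
    (g : PowerSeries K)
    (hg : g ^ 2 = 1 + PowerSeries.X)
    (hg0 : PowerSeries.constantCoeff g = 1)
    (a : ℕ → K) (ha : ∀ n, a n = PowerSeries.coeff n g)
    (c : ℕ)
    (y₁ y₂ : MvPolynomial (Fin 2) K)
    (hy₁ : y₁ = MvPolynomial.X 0 ^ c
        + ∑ n ∈ Finset.Icc 1 c,
            MvPolynomial.C (a n) * MvPolynomial.X 0 ^ (c - n) * MvPolynomial.X 1 ^ n)
    (hy₂ : y₂ = MvPolynomial.X 0 ^ c) :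
    MvPolynomial.X 0 * y₁ ^ 2 - (MvPolynomial.X 0 + MvPolynomial.X 1) * y₂ ^ 2
      ∈ (Ideal.span {(MvPolynomial.X 1 : MvPolynomial (Fin 2) K)}) ^ (c + 1) := by
  have ha0 : a 0 = 1 := by
    rw [ha, PowerSeries.coeff_zero_eq_constantCoeff, hg0]
  rw [Ideal.span_singleton_pow, Ideal.mem_span_singleton]
  -- coefficients of g*g
  have hcoeff : ∀ m : ℕ, (∑ p ∈ Finset.HasAntidiagonal.antidiagonal m, a p.1 * a p.2)
      = (if m = 0 then (1:K) else 0) + (if m = 1 then (1:K) else 0) := by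
    intro m
    have h1 : (∑ p ∈ Finset.HasAntidiagonal.antidiagonal m, a p.1 * a p.2)
        = PowerSeries.coeff m (g * g) := by
      rw [PowerSeries.coeff_mul]
      exact Finset.sum_congr rfl fun p _ => by rw [ha, ha]
    rw [h1, ← sq, hg, map_add, PowerSeries.coeff_one, PowerSeries.coeff_X]
  -- y₁ as a sum over range (c+1)
  have hy₁' : y₁ = ∑ n ∈ Finset.range (c + 1),
      MvPolynomial.C (a n) * MvPolynomial.X 0 ^ (c - n) * MvPolynomial.X 1 ^ n := by
    rw [hy₁, Finset.sum_range_succ', ha0, ← Finset.Ico_add_one_right_eq_Icc,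
      Finset.sum_Ico_eq_sum_range]
    simp only [Nat.add_sub_cancel, pow_zero, mul_one, Nat.sub_zero, map_one, one_mul]
    rw [add_comm]
    congr 1
    exact Finset.sum_congr rfl fun i _ => by rw [add_comm 1 i]
  -- expand y₁ ^ 2
  have hsq : y₁ ^ 2 = ∑ p ∈ (Finset.range (c+1)) ×ˢ (Finset.range (c+1)),
      MvPolynomial.C (a p.1 * a p.2) * MvPolynomial.X 0 ^ ((c - p.1) + (c - p.2))
        * MvPolynomial.X 1 ^ (p.1 + p.2) := by
    rw [sq, hy₁', Finset.sum_mul_sum, ← Finset.sum_product']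
    exact Finset.sum_congr rfl fun p _ => by rw [map_mul, pow_add, pow_add]; ring
  -- split into low and high t-degree parts
  set S := (Finset.range (c+1)) ×ˢ (Finset.range (c+1)) with hS
  set f : ℕ × ℕ → MvPolynomial (Fin 2) K := fun p =>
      MvPolynomial.C (a p.1 * a p.2) * MvPolynomial.X 0 ^ ((c - p.1) + (c - p.2))
        * MvPolynomial.X 1 ^ (p.1 + p.2) with hf
  have hsplit : y₁ ^ 2 = (∑ p ∈ S.filter (fun p => p.1 + p.2 ≤ c), f p)
      + ∑ p ∈ S.filter (fun p => ¬ p.1 + p.2 ≤ c), f p := by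
    rw [hsq, Finset.sum_filter_add_sum_filter_not]
  set B := ∑ p ∈ S.filter (fun p => ¬ p.1 + p.2 ≤ c), f p with hB
  have hBdvd : (MvPolynomial.X 1 : MvPolynomial (Fin 2) K) ^ (c + 1) ∣ B := by
    apply Finset.dvd_sum
    intro p hp
    have h : c + 1 ≤ p.1 + p.2 := by
      have := (Finset.mem_filter.mp hp).2
      omega
    exact Dvd.dvd.mul_left (pow_dvd_pow _ h) _
  -- the low part
  have hset : S.filter (fun p => p.1 + p.2 ≤ c)
      = (Finset.range (c+1)).biUnion (fun m => Finset.HasAntidiagonal.antidiagonal m) := by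
    ext p
    simp only [Finset.mem_filter, Finset.mem_biUnion, Finset.mem_range, Nat.lt_succ_iff,
      Finset.HasAntidiagonal.mem_antidiagonal, hS, Finset.mem_product]
    constructor
    · rintro ⟨⟨h1, h2⟩, h3⟩
      exact ⟨p.1 + p.2, h3, rfl⟩
    · rintro ⟨m, hm, hp⟩
      omega
  have hdisj : (↑(Finset.range (c+1)) : Set ℕ).PairwiseDisjoint
      (fun m => Finset.HasAntidiagonal.antidiagonal m) := by
    intro m _ m' _ hne
    simp only [Finset.disjoint_left]
    intro p hp hp'
    rw [Finset.HasAntidiagonal.mem_antidiagonal] at hp hp'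
    exact hne (hp ▸ hp')
  have hA : (∑ p ∈ S.filter (fun p => p.1 + p.2 ≤ c), f p)
      = ∑ m ∈ Finset.range (c+1),
        MvPolynomial.C ((if m = 0 then (1:K) else 0) + (if m = 1 then (1:K) else 0))
          * MvPolynomial.X 0 ^ (2*c - m) * MvPolynomial.X 1 ^ m := by
    rw [hset, Finset.sum_biUnion hdisj]
    apply Finset.sum_congr rfl
    intro m hm
    rw [Finset.mem_range, Nat.lt_succ_iff] at hm
    rw [← hcoeff m, map_sum, Finset.sum_mul, Finset.sum_mul]
    apply Finset.sum_congr rfl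
    intro p hp
    rw [Finset.HasAntidiagonal.mem_antidiagonal] at hp
    have h1 : (c - p.1) + (c - p.2) = 2*c - m := by omega
    rw [hf]
    simp only
    rw [h1, hp]
  have hA2 : (∑ p ∈ S.filter (fun p => p.1 + p.2 ≤ c), f p)
      = (MvPolynomial.X 0 : MvPolynomial (Fin 2) K) ^ (2*c)
        + (if 1 ≤ c then MvPolynomial.X 0 ^ (2*c - 1) * MvPolynomial.X 1 else 0) := by
    rw [hA]
    have : ∀ m ∈ Finset.range (c+1),
        MvPolynomial.C ((if m = 0 then (1:K) else 0) + (if m = 1 then (1:K) else 0))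
          * MvPolynomial.X 0 ^ (2*c - m) * MvPolynomial.X 1 ^ m
        = (if m = 0 then MvPolynomial.X 0 ^ (2*c) else 0)
          + (if m = 1 then MvPolynomial.X 0 ^ (2*c-1) * MvPolynomial.X 1 ^ 1 else (0:MvPolynomial (Fin 2) K)) := by
      intro m _
      rcases eq_or_ne m 0 with rfl | h0
      · simp
      rcases eq_or_ne m 1 with rfl | h1
      · simp
      simp [h0, h1]
    rw [Finset.sum_congr rfl this, Finset.sum_add_distrib,
      Finset.sum_ite_eq' (Finset.range (c+1)) 0,
      Finset.sum_ite_eq' (Finset.range (c+1)) 1]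
    simp only [Finset.mem_range, Nat.lt_succ_iff, Nat.zero_le, if_true, pow_one]
  -- finish
  rcases Nat.eq_zero_or_pos c with rfl | hc
  · obtain ⟨q, hq⟩ := hBdvd
    refine ⟨MvPolynomial.X 0 * q - 1, ?_⟩
    rw [hsplit, hA2, hy₂, hq]
    simp
    ring
  · obtain ⟨d, rfl⟩ : ∃ d, c = d + 1 := ⟨c - 1, by omega⟩
    obtain ⟨q, hq⟩ := hBdvd
    refine ⟨MvPolynomial.X 0 * q, ?_⟩
    rw [hsplit, hA2, hy₂, hq, if_pos (by omega : 1 ≤ d + 1)]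
    have h1 : 2 * (d+1) - 1 = 2*d + 1 := by omega
    have h2 : 2 * (d+1) = 2*d + 2 := by omega
    rw [h1, h2, ← pow_mul]
    have h3 : (d+1) * 2 = 2*d + 2 := by omega
    rw [h3]
    ring
end

section
/- There exists a polynomial F(x,t,y₁,y₂) = x·y₁² − (x+t)·y₂² with coefficients in K[x,t] such that for every c ∈ ℕ there exist polynomials y₁^{(c)}, y₂^{(c)} ∈ K[x,t] with F(x,t,y₁^{(c)},y₂^{(c)}) ∈ (t)^{c+1} and y₂^{(c)} ∉ (t), yet the only solution (y₁,y₂) ∈ K[[x,t]]² of F(x,t,y₁,y₂) = 0 is (0,0). -/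
/-!
Approximate solutions: if `S ∈ K[T]` has degree `≤ c` and `S² ≡ 1 + T mod T^(c+1)` (a
truncated square root, built by Newton steps), then its homogenization `y₁ = x^c S(t/x)` satisfies
`x y₁² - (x + t) x^(2c) = x^(2c+1) (S(t/x)² - (1 + t/x)) ∈ (t)^(c+1)`.

No exact solution: the `x`-adic order of `x y₁²` is odd while that of `(x + t) y₂²` is even,
since `x + t` is not divisible by `x`.
-/

open Polynomial

namespace Polynomial

theorem exists_sqrt_mod_X_pow {K : Type*} [Field K] [NeZero (2 : K)] {p : K[X]}
    (hp : p.coeff 0 = 1) (c : ℕ) :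
    ∃ S : K[X], S.natDegree ≤ c ∧ S.coeff 0 = 1 ∧ X ^ (c + 1) ∣ S ^ 2 - p := by
  induction c with
  | zero =>
    refine ⟨1, by simp, by simp, ?_⟩
    rw [zero_add, pow_one, X_dvd_iff]
    simp [hp]
  | succ c ih =>
    obtain ⟨S, hdeg, hS0, g, hg⟩ := ih
    set b : K := -g.coeff 0 / 2
    refine ⟨S + C b * X ^ (c + 1), ?_, by simp [hS0], ?_⟩
    · exact natDegree_add_le_of_degree_le (hdeg.trans c.le_succ) (natDegree_C_mul_X_pow_le b _)
    · have hstep : (S + C b * X ^ (c + 1)) ^ 2 - p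
          = X ^ (c + 1) * (g + 2 * C b * S + C b ^ 2 * X ^ (c + 1)) := by
        linear_combination hg
      rw [hstep, pow_succ]
      refine mul_dvd_mul_left _ (X_dvd_iff.mpr ?_)
      simp [mul_coeff_zero, hS0, b, mul_div_cancel₀ _ (two_ne_zero' K)]

theorem X_pow_dvd_homogenize {R : Type*} [CommSemiring R] [Nontrivial R] {p : R[X]} {k n : ℕ}
    (hk : X ^ k ∣ p) (hn : p.natDegree ≤ n) :
    MvPolynomial.X 0 ^ k ∣ p.homogenize n := by
  obtain ⟨g, rfl⟩ := hk
  rcases eq_or_ne g 0 with rfl | hg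
  · simp
  rw [(monic_X_pow k).natDegree_mul' hg, natDegree_X_pow] at hn
  rw [show n = k + (n - k) by omega, homogenize_mul _ _ (natDegree_X_pow k).le (by omega),
    homogenize_X_pow le_rfl, Nat.sub_self, pow_zero, mul_one]
  exact dvd_mul_right _ _

theorem homogenize_sq_sub_one_add_X {R : Type*} [CommRing R] {S : R[X]} {c : ℕ}
    (hS : S.natDegree ≤ c) :
    (S ^ 2 - (1 + X)).homogenize (2 * c + 1) = MvPolynomial.X 1 * S.homogenize c ^ 2
      - (MvPolynomial.X 1 + MvPolynomial.X 0) * (MvPolynomial.X 1 ^ c) ^ 2 := by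
  apply homogenize_eq_of_isHomogeneous
  · have hsq :=
      (MvPolynomial.isHomogeneous_X R 1).mul ((isHomogeneous_homogenize (n := c) S).pow 2)
    have hlin := ((MvPolynomial.isHomogeneous_X R 1).add (MvPolynomial.isHomogeneous_X R 0)).mul
      ((MvPolynomial.isHomogeneous_X_pow (1 : Fin 2) c).pow 2)
    convert hsq.sub hlin using 1; ring
  · simp [aeval_homogenize_X_one _ hS]

end Polynomial

namespace MvPolynomial

theorem X_pow_notMem_span_X {σ R : Type*} [CommSemiring R] [Nontrivial R] {i j : σ}
    (hij : i ≠ j) (c : ℕ) : (X i ^ c : MvPolynomial σ R) ∉ Ideal.span {X j} := by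
  classical
  rw [Ideal.mem_span_singleton]
  rintro ⟨e, he⟩
  simpa [hij] using congrArg (eval fun k ↦ if k = j then 0 else 1) he

theorem exists_X_mul_sq_sub_mem_span_X_pow {K : Type*} [Field K] [NeZero (2 : K)] (c : ℕ) :
    ∃ y : MvPolynomial (Fin 2) K, X 0 * y ^ 2 - (X 0 + X 1) * (X 0 ^ c) ^ 2
      ∈ Ideal.span {(X 1 : MvPolynomial (Fin 2) K)} ^ (c + 1) := by
  obtain ⟨S, hS, -, hdvd⟩ := exists_sqrt_mod_X_pow (p := (1 + Polynomial.X : K[X])) (by simp) c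
  have hdeg : (S ^ 2 - (1 + Polynomial.X)).natDegree ≤ 2 * c + 1 := by
    refine (natDegree_sub_le _ _).trans (max_le ((natDegree_pow_le_of_le 2 hS).trans (by omega)) ?_)
    exact (natDegree_add_le_of_degree_le (by simp) natDegree_X_le).trans (by omega)
  -- homogenization puts the polynomial variable first, whereas `t` is `X 1`
  have key := map_dvd (rename (Equiv.swap (0 : Fin 2) 1)) (X_pow_dvd_homogenize hdvd hdeg)
  rw [homogenize_sq_sub_one_add_X hS] at key
  refine ⟨rename (Equiv.swap 0 1) (S.homogenize c), ?_⟩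
  rw [Ideal.span_singleton_pow, Ideal.mem_span_singleton]
  simpa using key

end MvPolynomial

namespace MvPowerSeries

theorem eq_zero_of_mul_sq_eq_mul_sq {σ R : Type*} [CommSemiring R] [NoZeroDivisors R]
    (w : σ → ℕ) {a b f g : MvPowerSeries σ R}
    (ha : a.weightedOrder w = 1) (hb : b.weightedOrder w = 0) (h : a * f ^ 2 = b * g ^ 2) :
    g = 0 := by
  by_contra hg
  obtain ⟨n, hn⟩ := ENat.ne_top_iff_exists.mp ((weightedOrder_eq_top_iff w).not.mpr hg)
  have horder := congrArg (weightedOrder w) h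
  simp only [weightedOrder_mul, pow_two, ha, hb, ← hn, zero_add] at horder
  cases hf : f.weightedOrder w with
  | top => simp [hf, ← Nat.cast_add] at horder
  | coe m =>
    rw [hf] at horder
    norm_cast at horder
    omega

variable {σ R : Type*} [DecidableEq σ] [CommSemiring R]

theorem weightedOrder_single_X_self [Nontrivial R] (i : σ) :
    (X i : MvPowerSeries σ R).weightedOrder (Pi.single i 1) = 1 := by
  rw [X, weightedOrder_monomial_of_ne_zero _ one_ne_zero, Finsupp.weight_single_one_apply]
  simp

theorem weightedOrder_single_X_add_X [Nontrivial R] {i j : σ} (hij : i ≠ j) :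
    (X i + X j : MvPowerSeries σ R).weightedOrder (Pi.single i 1) = 0 := by
  refine nonpos_iff_eq_zero.mp ((weightedOrder_le _ (d := Finsupp.single j 1) ?_).trans ?_)
  · simp [coeff_X, Finsupp.single_eq_single_iff, hij.symm]
  · simp [Finsupp.weight_single_one_apply, hij]

theorem eq_zero_of_X_mul_sq_eq_X_add_X_mul_sq [NoZeroDivisors R] [Nontrivial R] {i j : σ}
    (hij : i ≠ j) {f g : MvPowerSeries σ R} (h : X i * f ^ 2 = (X i + X j) * g ^ 2) :
    f = 0 ∧ g = 0 := by
  have hg : g = 0 := eq_zero_of_mul_sq_eq_mul_sq (Pi.single i 1)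
    (weightedOrder_single_X_self i) (weightedOrder_single_X_add_X hij) h
  subst hg
  have hX : (X i : MvPowerSeries σ R) ≠ 0 := fun hX ↦ by
    simpa [hX] using weightedOrder_single_X_self (R := R) i
  simpa [hX] using h

end MvPowerSeries

/-- For F(x,t,y₁,y₂) = x·y₁² − (x+t)·y₂² (K = ℝ or ℂ): for every c there
are polynomials y₁,y₂ ∈ K[x,t] with F(y₁,y₂) ∈ (t)^{c+1} and y₂ ∉ (t), yet the only
solution of F = 0 in K[[x,t]]² is (0,0). -/
theorem stmt_3 (K : Type*) [RCLike K] :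
    (∀ c : ℕ, ∃ y₁ y₂ : MvPolynomial (Fin 2) K,
      MvPolynomial.X 0 * y₁ ^ 2 - (MvPolynomial.X 0 + MvPolynomial.X 1) * y₂ ^ 2
        ∈ (Ideal.span {(MvPolynomial.X 1 : MvPolynomial (Fin 2) K)}) ^ (c + 1)
      ∧ y₂ ∉ Ideal.span {(MvPolynomial.X 1 : MvPolynomial (Fin 2) K)})
    ∧
    (∀ y₁ y₂ : MvPowerSeries (Fin 2) K,
      MvPowerSeries.X 0 * y₁ ^ 2 = (MvPowerSeries.X 0 + MvPowerSeries.X 1) * y₂ ^ 2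
      → y₁ = 0 ∧ y₂ = 0) := by
  refine ⟨fun c ↦ ?_,
    fun y₁ y₂ ↦ MvPowerSeries.eq_zero_of_X_mul_sq_eq_X_add_X_mul_sq zero_ne_one⟩
  obtain ⟨y₁, hy₁⟩ := MvPolynomial.exists_X_mul_sq_sub_mem_span_X_pow (K := K) c
  exact ⟨y₁, _, hy₁, MvPolynomial.X_pow_notMem_span_X zero_ne_one c⟩
end

section
/- Let K be a field and consider the polynomial ring K[x,y,w₀,w₁,w₂,…] in countably many variables. Let I be the ideal generated by F_{k+1} := y·w_k − (k+1)·x·w_{k+1} for k ≥ 0 and F₀ := x·w₀ − z² (working in K[x,y,z,w₀,w₁,…]). Then for all integers 0 ≤ k < l, the element G_{k,l} := (l+1)·y·w_k·w_{l+1} − (k+1)·y·w_l·w_{k+1} belongs to I. -/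
open MvPolynomial

/-- Let I ⊆ K[x,y,z,w₀,w₁,…] be the ideal generated by F₀ = x·w₀ − z²
and F_{k+1} = y·w_k − (k+1)·x·w_{k+1} (k ≥ 0).  Then for all 0 ≤ k < l,
G_{k,l} = (l+1)·y·w_k·w_{l+1} − (k+1)·y·w_l·w_{k+1} ∈ I.
(Variables: w_k = X (inl k), x = X (inr 0), y = X (inr 1), z = X (inr 2).) -/
theorem stmt_8 (K : Type*) [Field K]
    (I : Ideal (MvPolynomial (ℕ ⊕ Fin 3) K))
    (hI : I = Ideal.span
      ({X (Sum.inr 0) * X (Sum.inl 0) - X (Sum.inr 2) ^ 2} ∪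
        Set.range (fun k : ℕ =>
          X (Sum.inr 1) * X (Sum.inl k)
            - ((k : MvPolynomial (ℕ ⊕ Fin 3) K) + 1) * X (Sum.inr 0) * X (Sum.inl (k + 1)))))
    (k l : ℕ) (hkl : k < l) :
    ((l : MvPolynomial (ℕ ⊕ Fin 3) K) + 1) * X (Sum.inr 1) * X (Sum.inl k) * X (Sum.inl (l + 1))
      - ((k : MvPolynomial (ℕ ⊕ Fin 3) K) + 1) * X (Sum.inr 1) * X (Sum.inl l) * X (Sum.inl (k + 1))
      ∈ I := by
  subst hI
  have hmem : ∀ m : ℕ,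
      X (Sum.inr 1) * X (Sum.inl m)
        - ((m : MvPolynomial (ℕ ⊕ Fin 3) K) + 1) * X (Sum.inr 0) * X (Sum.inl (m + 1)) ∈
      Ideal.span
        ({X (Sum.inr 0) * X (Sum.inl 0) - X (Sum.inr 2) ^ 2} ∪
          Set.range (fun k : ℕ =>
            X (Sum.inr 1) * X (Sum.inl k)
              - ((k : MvPolynomial (ℕ ⊕ Fin 3) K) + 1) * X (Sum.inr 0) * X (Sum.inl (k + 1)))) := by
    intro m
    exact Ideal.subset_span (Set.mem_union_right _ ⟨m, rfl⟩)
  have h := Ideal.sub_mem _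
    (Ideal.mul_mem_left _ (((l : MvPolynomial (ℕ ⊕ Fin 3) K) + 1) * X (Sum.inl (l + 1))) (hmem k))
    (Ideal.mul_mem_left _ (((k : MvPolynomial (ℕ ⊕ Fin 3) K) + 1) * X (Sum.inl (k + 1))) (hmem l))
  convert h using 1
  ring
end

section
/- Let K be ℝ or ℂ, let R = K[x,y,z,w₀,w₁,…]/I where I is the ideal generated by x·w₀ − z² and y·w_k − (k+1)·x·w_{k+1} (k ≥ 0). Then in the localization R[1/x], one has w_k = (1/k!)·y^k·z²·x^{−(k+1)} for every k ≥ 0, and R[1/x] is isomorphic to K[x,y,z][1/x]. -/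
/-!
Induction on k turns the relations into k!·x^{k+1}·w_k = y^k·z², which already holds in R. Once x
and the factorials are invertible, w_k is thus determined by x, y, z; conversely the values
w_k = y^k·z² / (k!·x^{k+1}) satisfy the defining relations in K[x,y,z][1/x]. The two resulting
algebra maps between R[1/x] and K[x,y,z][1/x] agree with the identity on generators, hence are
mutually inverse.
-/

open MvPolynomial

/-- The ideal I generated by x·w₀ − z² and y·w_k − (k+1)·x·w_{k+1} (k ≥ 0) in
K[x,y,z,w₀,w₁,…], with w_k = X (inl k), x = X (inr 0), y = X (inr 1), z = X (inr 2). -/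
noncomputable def rondIdeal (K : Type*) [CommRing K] : Ideal (MvPolynomial (ℕ ⊕ Fin 3) K) :=
  Ideal.span
    ({X (Sum.inr 0) * X (Sum.inl 0) - X (Sum.inr 2) ^ 2} ∪
      Set.range (fun k : ℕ =>
        X (Sum.inr 1) * X (Sum.inl k)
          - ((k : MvPolynomial (ℕ ⊕ Fin 3) K) + 1) * X (Sum.inr 0) * X (Sum.inl (k + 1))))

/-- The quotient ring R = K[x,y,z,w₀,w₁,…]/I. -/
noncomputable abbrev rondRing (K : Type*) [CommRing K] : Type _ :=
  MvPolynomial (ℕ ⊕ Fin 3) K ⧸ rondIdeal K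

/-- Image of a variable in R. -/
noncomputable def rv (K : Type*) [CommRing K] (i : ℕ ⊕ Fin 3) : rondRing K :=
  Ideal.Quotient.mk (rondIdeal K) (X i)

open scoped Nat

section Relations

variable {K : Type*} [CommRing K]

theorem rv_x_mul_rv_w_zero : rv K (.inr 0) * rv K (.inl 0) = rv K (.inr 2) ^ 2 := by
  simp only [rv, ← map_mul, ← map_pow]
  exact Ideal.Quotient.eq.mpr (Ideal.subset_span (.inl rfl))

theorem rv_y_mul_rv_w (k : ℕ) :
    rv K (.inr 1) * rv K (.inl k) = (k + 1) * rv K (.inr 0) * rv K (.inl (k + 1)) := by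
  have h := Ideal.Quotient.eq.mpr (Ideal.subset_span (.inr ⟨k, rfl⟩) :
    _ ∈ rondIdeal K)
  simp only [map_mul, map_add, map_one, map_natCast] at h
  exact h

theorem factorial_mul_rv_x_pow_mul_rv_w (k : ℕ) :
    (k ! : rondRing K) * rv K (.inr 0) ^ (k + 1) * rv K (.inl k)
      = rv K (.inr 1) ^ k * rv K (.inr 2) ^ 2 := by
  induction k with
  | zero => simpa using rv_x_mul_rv_w_zero
  | succ k ih =>
    rw [Nat.factorial_succ]
    push_cast
    linear_combination
      rv K (.inr 1) * ih - (k ! : rondRing K) * rv K (.inr 0) ^ (k + 1) * rv_y_mul_rv_w (K := K) k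

end Relations

section UniversalProperty

variable {K S : Type*} [CommRing K] [CommRing S] [Algebra K S]

noncomputable def rondLift (v : ℕ ⊕ Fin 3 → S) (h0 : v (.inr 0) * v (.inl 0) = v (.inr 2) ^ 2)
    (hsucc : ∀ k : ℕ, v (.inr 1) * v (.inl k) = (k + 1) * v (.inr 0) * v (.inl (k + 1))) :
    rondRing K →ₐ[K] S :=
  Ideal.Quotient.liftₐ _ (aeval v) fun _ hp => by
    refine (Ideal.span_le (I := RingHom.ker (aeval v)) |>.mpr ?_) hp
    rintro _ (rfl | ⟨k, rfl⟩) <;> simp [RingHom.mem_ker, h0, hsucc]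

@[simp]
theorem rondLift_rv (v : ℕ ⊕ Fin 3 → S) (h0 : v (.inr 0) * v (.inl 0) = v (.inr 2) ^ 2)
    (hsucc : ∀ k : ℕ, v (.inr 1) * v (.inl k) = (k + 1) * v (.inr 0) * v (.inl (k + 1)))
    (i : ℕ ⊕ Fin 3) : rondLift v h0 hsucc (rv K i) = v i :=
  aeval_X v i

end UniversalProperty

section Values

variable {K S : Type*} [Field K] [CommRing S] [Algebra K S]

theorem algebraMap_inv_natCast_mul {n : ℕ} (hn : (n : K) ≠ 0) :
    algebraMap K S (n : K)⁻¹ * n = 1 := by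
  rw [← map_natCast (algebraMap K S), ← map_mul, inv_mul_cancel₀ hn, map_one]

-- `a` gives the values of x, y, z and `u` plays the role of x⁻¹.
variable (K) in
noncomputable def rondValues (a : Fin 3 → S) (u : S) : ℕ ⊕ Fin 3 → S
  | .inl k => algebraMap K S (k ! : K)⁻¹ * a 1 ^ k * a 2 ^ 2 * u ^ (k + 1)
  | .inr i => a i

variable (a : Fin 3 → S) (u : S)

theorem AlgHom.map_rondValues {T : Type*} [CommRing T] [Algebra K T] (g : S →ₐ[K] T)
    (j : ℕ ⊕ Fin 3) :
    g (rondValues K a u j) = rondValues K (fun i => g (a i)) (g u) j := by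
  cases j <;> simp [rondValues]

variable {a u} (hu : a 0 * u = 1)
include hu

theorem rondValues_relation_zero :
    rondValues K a u (.inr 0) * rondValues K a u (.inl 0)
      = rondValues K a u (.inr 2) ^ 2 := by
  simp only [rondValues, Nat.factorial_zero, Nat.cast_one, inv_one, map_one]
  linear_combination a 2 ^ 2 * hu

theorem rondValues_relation_succ [CharZero K] (k : ℕ) :
    rondValues K a u (.inr 1) * rondValues K a u (.inl k)
      = (k + 1) * rondValues K a u (.inr 0) * rondValues K a u (.inl (k + 1)) := by
  have hfac : (k + 1 : S) * algebraMap K S ((k + 1)! : K)⁻¹ = algebraMap K S (k ! : K)⁻¹ := by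
    rw [Nat.factorial_succ, Nat.cast_mul, mul_inv, map_mul, ← mul_assoc, mul_comm (k + 1 : S),
      ← Nat.cast_add_one, algebraMap_inv_natCast_mul (Nat.cast_ne_zero.mpr k.succ_ne_zero),
      one_mul]
  simp only [rondValues]
  linear_combination (-(k + 1 : S) * algebraMap K S ((k + 1)! : K)⁻¹ * a 1 ^ (k + 1) * a 2 ^ 2
    * u ^ (k + 1)) * hu - a 1 ^ (k + 1) * a 2 ^ 2 * u ^ (k + 1) * hfac

theorem rondValues_inl_eq [CharZero K] {w : S} {k : ℕ}
    (hw : (k ! : S) * a 0 ^ (k + 1) * w = a 1 ^ k * a 2 ^ 2) :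
    rondValues K a u (.inl k) = w := by
  have hfac : algebraMap K S (k ! : K)⁻¹ * (k ! : S) = 1 :=
    algebraMap_inv_natCast_mul (Nat.cast_ne_zero.mpr k.factorial_ne_zero)
  have hpow : (a 0 * u) ^ (k + 1) = 1 := by rw [hu, one_pow]
  simp only [rondValues]
  linear_combination -(algebraMap K S (k ! : K)⁻¹ * u ^ (k + 1)) * hw
    + w * (a 0 * u) ^ (k + 1) * hfac + w * hpow

end Values

section PolyLocToRondLoc

variable (K : Type*) [CommRing K]

local notation "P" => MvPolynomial (Fin 3) K
local notation "Rx" => Localization.Away (rv K (Sum.inr 0))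
local notation "Px" => Localization.Away (X 0 : MvPolynomial (Fin 3) K)

noncomputable def polyLocToRondLoc : Px →ₐ[K] Rx :=
  IsLocalization.Away.liftAlgHom (X 0)
    (f := (IsScalarTower.toAlgHom K (rondRing K) Rx).comp (aeval (rv K ∘ Sum.inr)))
    (by simpa using IsLocalization.Away.algebraMap_isUnit (S := Rx) (rv K (.inr 0)))

variable {K}

theorem polyLocToRondLoc_algebraMap_X (i : Fin 3) :
    polyLocToRondLoc K (algebraMap P Px (X i)) = algebraMap (rondRing K) Rx (rv K (.inr i)) := by
  rw [polyLocToRondLoc, IsLocalization.Away.liftAlgHom_apply, IsLocalization.Away.lift_eq]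
  simp

theorem algebraMap_rv_x_mul_polyLocToRondLoc_invSelf :
    algebraMap (rondRing K) Rx (rv K (.inr 0))
      * polyLocToRondLoc K (IsLocalization.Away.invSelf (X 0 : P)) = 1 := by
  rw [← polyLocToRondLoc_algebraMap_X, ← map_mul, IsLocalization.Away.mul_invSelf, map_one]

end PolyLocToRondLoc

section RondLocToPolyLoc

variable (K : Type*) [Field K] [CharZero K]

local notation "P" => MvPolynomial (Fin 3) K
local notation "Rx" => Localization.Away (rv K (Sum.inr 0))
local notation "Px" => Localization.Away (X 0 : MvPolynomial (Fin 3) K)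

noncomputable def rondLocToPolyLoc : Rx →ₐ[K] Px :=
  IsLocalization.Away.liftAlgHom (rv K (.inr 0))
    (f := rondLift _ (rondValues_relation_zero (K := K) (a := fun i => algebraMap P Px (X i))
        (IsLocalization.Away.mul_invSelf _))
      (rondValues_relation_succ (IsLocalization.Away.mul_invSelf _)))
    (by simpa [rondValues] using IsLocalization.Away.algebraMap_isUnit (S := Px) (X 0 : P))

variable {K}

theorem rondLocToPolyLoc_algebraMap_rv (j : ℕ ⊕ Fin 3) :
    rondLocToPolyLoc K (algebraMap (rondRing K) Rx (rv K j))
      = rondValues K (fun i => algebraMap P Px (X i))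
          (IsLocalization.Away.invSelf (X 0 : P)) j := by
  rw [rondLocToPolyLoc, IsLocalization.Away.liftAlgHom_apply, IsLocalization.Away.lift_eq]
  exact rondLift_rv ..

theorem rondLocToPolyLoc_comp_polyLocToRondLoc :
    (rondLocToPolyLoc K).comp (polyLocToRondLoc K) = AlgHom.id K Px := by
  refine IsLocalization.algHom_ext (Submonoid.powers (X 0 : P))
    (MvPolynomial.algHom_ext fun i => ?_)
  change rondLocToPolyLoc K (polyLocToRondLoc K (algebraMap P Px (X i))) = algebraMap P Px (X i)
  rw [polyLocToRondLoc_algebraMap_X, rondLocToPolyLoc_algebraMap_rv, rondValues]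

theorem polyLocToRondLoc_comp_rondLocToPolyLoc :
    (polyLocToRondLoc K).comp (rondLocToPolyLoc K) = AlgHom.id K Rx := by
  refine IsLocalization.algHom_ext (Submonoid.powers (rv K (.inr 0)))
    (Ideal.Quotient.algHom_ext _ (MvPolynomial.algHom_ext fun j => ?_))
  change polyLocToRondLoc K (rondLocToPolyLoc K (algebraMap (rondRing K) Rx (rv K j)))
    = algebraMap (rondRing K) Rx (rv K j)
  rw [rondLocToPolyLoc_algebraMap_rv, AlgHom.map_rondValues]
  simp only [polyLocToRondLoc_algebraMap_X]
  cases j with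
  | inl k =>
    refine rondValues_inl_eq algebraMap_rv_x_mul_polyLocToRondLoc_invSelf ?_
    simpa using congrArg (algebraMap (rondRing K) Rx) (factorial_mul_rv_x_pow_mul_rv_w k)
  | inr i => rfl

end RondLocToPolyLoc

set_option synthInstance.maxHeartbeats 1000000 in
/-- In R[1/x] one has k!·x^{k+1}·w_k = y^k·z² (i.e.
w_k = (1/k!)·y^k·z²·x^{−(k+1)}) for every k, and R[1/x] ≅ K[x,y,z][1/x]. -/
theorem stmt_9 (K : Type*) [RCLike K] :
    (∀ k : ℕ,
      (k.factorial : Localization.Away (rv K (Sum.inr 0)))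
          * algebraMap (rondRing K) (Localization.Away (rv K (Sum.inr 0)))
              (rv K (Sum.inr 0)) ^ (k + 1)
          * algebraMap (rondRing K) (Localization.Away (rv K (Sum.inr 0)))
              (rv K (Sum.inl k))
        = algebraMap (rondRing K) (Localization.Away (rv K (Sum.inr 0)))
              (rv K (Sum.inr 1)) ^ k
          * algebraMap (rondRing K) (Localization.Away (rv K (Sum.inr 0)))
              (rv K (Sum.inr 2)) ^ 2)
    ∧ Nonempty
        (Localization.Away (rv K (Sum.inr 0)) ≃+*
          Localization.Away (X 0 : MvPolynomial (Fin 3) K)) := by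
  refine ⟨fun k => ?_, ⟨(AlgEquiv.ofAlgHom (rondLocToPolyLoc K) (polyLocToRondLoc K)
    rondLocToPolyLoc_comp_polyLocToRondLoc polyLocToRondLoc_comp_rondLocToPolyLoc).toRingEquiv⟩⟩
  simpa using congrArg (algebraMap (rondRing K) (Localization.Away (rv K (Sum.inr 0))))
    (factorial_mul_rv_x_pow_mul_rv_w k)
end

section
/- Let R be a commutative ring and let F(x,y₁,y₂,y₃) = x·y₁² − (x+y₃)·y₂² ∈ R[x][y₁,y₂,y₃]. In K[[x,t]] with K = ℝ or ℂ, for every c ∈ ℕ the triple (y₁,y₂,y₃) = (x^c + ∑_{n=1}^{c} a_n x^{c−n} tⁿ, x^c, t), where a_n = binom(1/2,n), satisfies x·y₁² − (x + y₃)·y₂² ∈ (t)^{c}, while any exact solution (ỹ₁, ỹ₂, ỹ₃) ∈ K[[x,t]]³ with ỹ₃ ≡ t mod (t)² and x·ỹ₁² = (x + ỹ₃)·ỹ₂² must have ỹ₁ = ỹ₂ = 0. -/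
open Finset MvPowerSeries



lemma stmt15_double {K : Type*} [Field K] (a : ℕ → K) (n : ℕ) :
    (n : K) * ∑ i ∈ range (n + 1), a i * a (n - i)
      = 2 * ∑ i ∈ range (n + 1), (i : K) * (a i * a (n - i)) := by
  rw [Finset.mul_sum]
  have h1 : ∀ i ∈ range (n + 1), (n : K) * (a i * a (n - i))
      = (i : K) * (a i * a (n - i)) + ((n - i : ℕ) : K) * (a i * a (n - i)) := by
    intro i hi
    rw [mem_range, Nat.lt_succ_iff] at hi
    rw [← add_mul, Nat.cast_sub hi]
    ring_nf
  rw [Finset.sum_congr rfl h1, Finset.sum_add_distrib]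
  have h2 : ∑ i ∈ range (n + 1), ((n - i : ℕ) : K) * (a i * a (n - i))
      = ∑ i ∈ range (n + 1), (i : K) * (a i * a (n - i)) := by
    have h3 := Finset.sum_range_reflect
      (fun i => ((n - i : ℕ) : K) * (a i * a (n - i))) (n + 1)
    simp only [Nat.add_sub_cancel] at h3
    rw [← h3]
    refine Finset.sum_congr rfl fun j hj => ?_
    rw [mem_range, Nat.lt_succ_iff] at hj
    rw [Nat.sub_sub_self hj, mul_comm (a (n - j))]
  rw [h2]; ring

lemma stmt15_Trec {K : Type*} [Field K] [CharZero K] (a : ℕ → K)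
    (harec : ∀ i : ℕ, ((i + 1 : ℕ) : K) * a (i + 1) = (1 / 2 - (i : K)) * a i) (n : ℕ) :
    ((n + 1 : ℕ) : K) * ∑ i ∈ range (n + 2), a i * a (n + 1 - i)
      = (1 - (n : K)) * ∑ i ∈ range (n + 1), a i * a (n - i) := by
  have h1 := stmt15_double a (n + 1)
  have h2 : ∑ i ∈ range (n + 2), (i : K) * (a i * a (n + 1 - i))
      = ∑ i ∈ range (n + 1), (1 / 2 - (i : K)) * (a i * a (n - i)) := by
    rw [Finset.sum_range_succ' (fun i => (i : K) * (a i * a (n + 1 - i))) (n + 1)]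
    simp only [Nat.cast_zero, zero_mul, add_zero]
    refine Finset.sum_congr rfl fun i hi => ?_
    have hsub : n + 1 - (i + 1) = n - i := by omega
    rw [hsub, ← mul_assoc, harec i, mul_assoc]
  have h3 := stmt15_double a n
  rw [h1, h2]
  have expand : ∑ i ∈ range (n + 1), (1 / 2 - (i : K)) * (a i * a (n - i))
      = (1 / 2) * (∑ i ∈ range (n + 1), a i * a (n - i))
        - ∑ i ∈ range (n + 1), (i : K) * (a i * a (n - i)) := by
    rw [Finset.mul_sum, ← Finset.sum_sub_distrib]
    refine Finset.sum_congr rfl fun i _ => by ring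
  rw [expand]
  set S := ∑ i ∈ range (n + 1), a i * a (n - i) with hS
  set Si := ∑ i ∈ range (n + 1), (i : K) * (a i * a (n - i)) with hSi
  have h22 : (2:K) ≠ 0 := two_ne_zero
  field_simp
  linear_combination h3

lemma stmt15_T (K : Type*) [Field K] [CharZero K] (a : ℕ → K)
    (ha : ∀ n, a n = (∏ i ∈ Finset.range n, ((1 : K) / 2 - (i : K))) / (n.factorial : K)) :
    ∀ s : ℕ, ∑ i ∈ range (s + 1), a i * a (s - i) = if s ≤ 1 then 1 else 0 := by
  have ha0 : a 0 = 1 := by simp [ha 0]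
  have harec : ∀ i : ℕ, ((i + 1 : ℕ) : K) * a (i + 1) = (1 / 2 - (i : K)) * a i := by
    intro i
    have hfac : ((i.factorial : K)) ≠ 0 := Nat.cast_ne_zero.mpr (Nat.factorial_ne_zero i)
    have hfac1 : (((i + 1).factorial : K)) ≠ 0 := Nat.cast_ne_zero.mpr (Nat.factorial_ne_zero _)
    have h2 : ((i : K) + 1) ≠ 0 := Nat.cast_add_one_ne_zero i
    have hd : ((i : K) + 1) * (i.factorial : K) ≠ 0 := mul_ne_zero h2 hfac
    rw [ha (i + 1), ha i, Finset.prod_range_succ, Nat.factorial_succ]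
    set P := ∏ j ∈ Finset.range i, ((1 : K) / 2 - (j : K)) with hP
    push_cast
    field_simp
  have ha1 : a 1 = 1 / 2 := by
    have := harec 0
    simpa [ha0] using this
  -- key recurrence gives vanishing for s ≥ 2
  have hvan : ∀ k : ℕ, ∑ i ∈ range (k + 2 + 1), a i * a (k + 2 - i) = 0 := by
    intro k
    induction k with
    | zero =>
      have h := stmt15_Trec a harec 1
      have hT1 : ∑ i ∈ range 2, a i * a (1 - i) = 1 := by
        rw [Finset.sum_range_succ, Finset.sum_range_one]
        simp [ha0, ha1]
        norm_num
      rw [hT1] at h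
      norm_num at h
      exact h
    | succ k ih =>
      have h := stmt15_Trec a harec (k + 2)
      rw [ih, mul_zero] at h
      have hne : ((k + 2 + 1 : ℕ) : K) ≠ 0 := Nat.cast_ne_zero.mpr (by omega)
      have := mul_eq_zero.mp h
      rcases this with h' | h'
      · exact absurd h' hne
      · exact h'
  intro s
  match s with
  | 0 => simp [ha0]
  | 1 =>
    rw [Finset.sum_range_succ, Finset.sum_range_one]
    simp [ha0, ha1]; norm_num
  | (k + 2) =>
    rw [if_neg (by omega)]
    exact hvan k



noncomputable def stmt15ev (K : Type*) [CommRing K] :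
    MvPowerSeries (Fin 2) K →+* PowerSeries K where
  toFun f := PowerSeries.mk fun n => MvPowerSeries.coeff (Finsupp.single 1 n) f
  map_one' := by
    ext n
    simp [MvPowerSeries.coeff_one, Finsupp.single_eq_zero, PowerSeries.coeff_one]
  map_mul' f g := by
    ext n
    rw [PowerSeries.coeff_mk, PowerSeries.coeff_mul, MvPowerSeries.coeff_mul,
      Finsupp.antidiagonal_single, Finset.sum_map]
    simp [PowerSeries.coeff_mk]
  map_zero' := by ext n; simp
  map_add' f g := by ext n; simp

lemma stmt15ev_X0 (K : Type*) [CommRing K] :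
    stmt15ev K (MvPowerSeries.X 0) = 0 := by
  ext n
  simp only [stmt15ev, RingHom.coe_mk, MonoidHom.coe_mk, OneHom.coe_mk, PowerSeries.coeff_mk,
    MvPowerSeries.coeff_X, map_zero]
  rw [if_neg]
  intro h
  have := DFunLike.congr_fun h 0
  simp [Finsupp.single_apply] at this

lemma stmt15ev_X1 (K : Type*) [CommRing K] :
    stmt15ev K (MvPowerSeries.X 1) = PowerSeries.X := by
  ext n
  simp only [stmt15ev, RingHom.coe_mk, MonoidHom.coe_mk, OneHom.coe_mk, PowerSeries.coeff_mk,
    MvPowerSeries.coeff_X, PowerSeries.coeff_X]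
  simp only [(Finsupp.single_injective (1 : Fin 2)).eq_iff]

lemma stmt15_X0_dvd {K : Type*} [CommRing K] {f : MvPowerSeries (Fin 2) K}
    (h : stmt15ev K f = 0) : MvPowerSeries.X 0 ∣ f := by
  rw [MvPowerSeries.X_dvd_iff]
  intro m hm
  have hm' : m = Finsupp.single 1 (m 1) := by
    ext i
    fin_cases i
    · simpa [Finsupp.single_apply] using hm
    · simp [Finsupp.single_apply]
  have := congrArg (PowerSeries.coeff (m 1)) h
  simpa [stmt15ev, PowerSeries.coeff_mk, ← hm'] using this

lemma stmt15_part2 (K : Type*) [Field K]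
    (y₁ y₂ y₃ : MvPowerSeries (Fin 2) K)
    (h3 : y₃ - MvPowerSeries.X 1
          ∈ (Ideal.span {(MvPowerSeries.X 1 : MvPowerSeries (Fin 2) K)}) ^ 2)
    (heq : MvPowerSeries.X 0 * y₁ ^ 2 = (MvPowerSeries.X 0 + y₃) * y₂ ^ 2) :
    y₁ = 0 ∧ y₂ = 0 := by
  set x : MvPowerSeries (Fin 2) K := MvPowerSeries.X 0 with hx
  have hX0 : (MvPowerSeries.X 0 : MvPowerSeries (Fin 2) K) ≠ 0 := by
    intro h0
    have := congrArg (MvPowerSeries.coeff (Finsupp.single 0 1)) h0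
    simp at this
  -- ev of y₃ is nonzero
  rw [Ideal.span_singleton_pow, Ideal.mem_span_singleton] at h3
  obtain ⟨q, hq⟩ := h3
  have hy3 : stmt15ev K y₃ = PowerSeries.X + PowerSeries.X ^ 2 * stmt15ev K q := by
    have : y₃ = MvPowerSeries.X 1 + MvPowerSeries.X 1 ^ 2 * q := by
      rw [← hq]; ring
    rw [this, map_add, map_mul, map_pow, stmt15ev_X1]
  have hy3ne : stmt15ev K y₃ ≠ 0 := by
    intro h0
    have := congrArg (PowerSeries.coeff 1) h0
    rw [hy3] at this
    simp [PowerSeries.coeff_X_pow_mul' _ 2 1] at this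
  have key : ∀ n : ℕ, ∀ u v : MvPowerSeries (Fin 2) K,
      MvPowerSeries.X 0 * u ^ 2 = (MvPowerSeries.X 0 + y₃) * v ^ 2 →
      (MvPowerSeries.X 0 : MvPowerSeries (Fin 2) K) ^ n ∣ u ∧
      (MvPowerSeries.X 0 : MvPowerSeries (Fin 2) K) ^ n ∣ v := by
    intro n
    induction n with
    | zero => intro u v _; simp
    | succ n ih =>
      intro u v h
      have hv0 : stmt15ev K v = 0 := by
        have h' := congrArg (stmt15ev K) h
        rw [map_mul, map_mul, map_add, map_pow, map_pow, stmt15ev_X0] at h'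
        simp only [zero_mul, zero_add] at h'
        have := mul_eq_zero.mp h'.symm
        rcases this with h'' | h''
        · exact absurd h'' hy3ne
        · exact pow_eq_zero_iff (n := 2) (by norm_num) |>.mp h''
      obtain ⟨z, hz⟩ := stmt15_X0_dvd hv0
      have h2 : u ^ 2 = (MvPowerSeries.X 0 + y₃) * MvPowerSeries.X 0 * z ^ 2 := by
        apply mul_left_cancel₀ hX0
        rw [h, hz]; ring
      have hu0 : stmt15ev K u = 0 := by
        have h' := congrArg (stmt15ev K) h2
        rw [map_pow, map_mul, map_mul, stmt15ev_X0] at h'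
        simp only [mul_zero, zero_mul] at h'
        exact pow_eq_zero_iff (n := 2) (by norm_num) |>.mp h'
      obtain ⟨w, hw⟩ := stmt15_X0_dvd hu0
      have h3' : MvPowerSeries.X 0 * w ^ 2 = (MvPowerSeries.X 0 + y₃) * z ^ 2 := by
        apply mul_left_cancel₀ hX0
        rw [hw] at h2
        linear_combination h2
      obtain ⟨hw', hz'⟩ := ih w z h3'
      constructor
      · rw [hw, pow_succ']
        exact mul_dvd_mul_left _ hw'
      · rw [hz, pow_succ']
        exact mul_dvd_mul_left _ hz'
  have hzero : ∀ f : MvPowerSeries (Fin 2) K,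
      (∀ n : ℕ, (MvPowerSeries.X 0 : MvPowerSeries (Fin 2) K) ^ n ∣ f) → f = 0 := by
    intro f hf
    ext m
    rw [map_zero]
    exact MvPowerSeries.X_pow_dvd_iff.mp (hf (m 0 + 1)) m (Nat.lt_succ_self _)
  exact ⟨hzero y₁ fun n => (key n y₁ y₂ heq).1, hzero y₂ fun n => (key n y₁ y₂ heq).2⟩

lemma stmt15_part1 (K : Type*) [Field K] [CharZero K] (a : ℕ → K)
    (ha : ∀ n, a n = (∏ i ∈ Finset.range n, ((1 : K) / 2 - (i : K))) / (n.factorial : K))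
    (hT : ∀ s : ℕ, ∑ i ∈ range (s + 1), a i * a (s - i) = if s ≤ 1 then 1 else 0)
    (c : ℕ) :
    (MvPowerSeries.X 1 : MvPowerSeries (Fin 2) K) ^ c ∣
      MvPowerSeries.X 0 *
        (∑ n ∈ range (c + 1),
          MvPowerSeries.C (σ := Fin 2) (R := K) (a n) * MvPowerSeries.X 0 ^ (c - n)
            * MvPowerSeries.X 1 ^ n) ^ 2
      - (MvPowerSeries.X 0 + MvPowerSeries.X 1) * (MvPowerSeries.X 0 ^ c) ^ 2 := by
  classical
  rcases Nat.eq_zero_or_pos c with hc | hc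
  · subst hc; simp
  set R := MvPowerSeries (Fin 2) K
  set x : R := MvPowerSeries.X 0 with hxdef
  set t : R := MvPowerSeries.X 1 with htdef
  set A : ℕ → R := fun n => MvPowerSeries.C (σ := Fin 2) (R := K) (a n) * x ^ (c - n) * t ^ n with hA
  set S : Finset (ℕ × ℕ) := range (c + 1) ×ˢ range (c + 1) with hS
  set g : ℕ × ℕ → R := fun p => x * (A p.1 * A p.2) with hg
  have hsq : x * (∑ n ∈ range (c + 1), A n) ^ 2 = ∑ p ∈ S, g p := by
    rw [sq, Finset.sum_mul_sum, Finset.mul_sum, hS, Finset.sum_product]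
    simp only [hg, Finset.mul_sum]
  rw [hsq]
  have hsplit := Finset.sum_filter_add_sum_filter_not S (fun p => p.1 + p.2 ≤ c) g
  -- the low part equals (x+t)*x^(2c)
  have hlow : ∑ p ∈ S.filter (fun p => p.1 + p.2 ≤ c), g p = (x + t) * (x ^ c) ^ 2 := by
    have hbi : S.filter (fun p => p.1 + p.2 ≤ c)
        = (range (c + 1)).biUnion (fun s => Finset.HasAntidiagonal.antidiagonal s) := by
      ext ⟨i, j⟩
      simp only [Finset.mem_filter, hS, Finset.mem_product, Finset.mem_range,
        Finset.mem_biUnion, Nat.lt_succ_iff]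
      constructor
      · rintro ⟨⟨h1, h2⟩, h3⟩
        exact ⟨i + j, h3, by rw [Finset.HasAntidiagonal.mem_antidiagonal]⟩
      · rintro ⟨s, hs, hmem⟩
        rw [Finset.HasAntidiagonal.mem_antidiagonal] at hmem
        omega
    have hdisj : ∀ s ∈ range (c + 1), ∀ s' ∈ range (c + 1), s ≠ s' →
        Disjoint (Finset.HasAntidiagonal.antidiagonal s) (Finset.HasAntidiagonal.antidiagonal s') := by
      intro s _ s' _ hss
      rw [Finset.disjoint_left]
      intro p hp hp'
      rw [Finset.HasAntidiagonal.mem_antidiagonal] at hp hp'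
      exact hss (hp ▸ hp')
    rw [hbi, Finset.sum_biUnion hdisj]
    have hinner : ∀ s ∈ range (c + 1), ∑ p ∈ Finset.HasAntidiagonal.antidiagonal s, g p
        = MvPowerSeries.C (σ := Fin 2) (R := K) (if s ≤ 1 then 1 else 0) * (x ^ (2 * c + 1 - s) * t ^ s) := by
      intro s hs
      rw [Finset.mem_range, Nat.lt_succ_iff] at hs
      have step : ∀ p ∈ Finset.HasAntidiagonal.antidiagonal s,
          g p = MvPowerSeries.C (σ := Fin 2) (R := K) (a p.1 * a p.2) * (x ^ (2 * c + 1 - s) * t ^ s) := by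
        intro p hp
        rw [Finset.HasAntidiagonal.mem_antidiagonal] at hp
        have e1 : 2 * c + 1 - s = (c - p.1) + (c - p.2) + 1 := by omega
        have e2 : s = p.1 + p.2 := hp.symm
        rw [e1, e2, map_mul, hg, hA]
        simp only [pow_add, pow_one]
        ring
      rw [Finset.sum_congr rfl step, ← Finset.sum_mul, ← map_sum,
        Finset.Nat.sum_antidiagonal_eq_sum_range_succ_mk, hT s]
    rw [Finset.sum_congr rfl hinner]
    have hsubset : ({0, 1} : Finset ℕ) ⊆ range (c + 1) := by
      intro s hs
      simp only [Finset.mem_insert, Finset.mem_singleton] at hs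
      rw [Finset.mem_range]
      omega
    rw [← Finset.sum_subset hsubset]
    · rw [Finset.sum_pair (by norm_num : (0 : ℕ) ≠ 1)]
      norm_num
      ring
    · intro s hs hns
      simp only [Finset.mem_insert, Finset.mem_singleton] at hns
      push_neg at hns
      rw [if_neg (by omega), map_zero, zero_mul]
  -- the high part is divisible by t^c
  have hhigh : t ^ c ∣ ∑ p ∈ S.filter (fun p => ¬ p.1 + p.2 ≤ c), g p := by
    apply Finset.dvd_sum
    intro p hp
    rw [Finset.mem_filter] at hp
    obtain ⟨-, hgt⟩ := hp
    have h1 : (t : R) ^ c ∣ t ^ p.1 * t ^ p.2 := by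
      rw [← pow_add]
      exact pow_dvd_pow _ (by omega)
    have h2 : g p = (t ^ p.1 * t ^ p.2) *
        (x * (MvPowerSeries.C (σ := Fin 2) (R := K) (a p.1) * x ^ (c - p.1))
          * (MvPowerSeries.C (σ := Fin 2) (R := K) (a p.2) * x ^ (c - p.2))) := by
      rw [hg, hA]; ring
    rw [h2]
    exact h1.mul_right _
  have hdiff : (∑ p ∈ S, g p) - (x + t) * (x ^ c) ^ 2
      = ∑ p ∈ S.filter (fun p => ¬ p.1 + p.2 ≤ c), g p := by
    rw [← hsplit, hlow]; ring
  rw [hdiff]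
  exact hhigh



open Finset

/-- For F(x,y₁,y₂,y₃) = x·y₁² − (x+y₃)·y₂² in K[[x,t]] (K = ℝ or ℂ),
with a_n = binom(1/2,n): for every c, the triple
(y₁,y₂,y₃) = (x^c + ∑_{n=1}^c a_n x^{c−n} tⁿ, x^c, t) gives
x·y₁² − (x+y₃)·y₂² ∈ (t)^c; while any (ỹ₁,ỹ₂,ỹ₃) with ỹ₃ ≡ t mod (t)² and
x·ỹ₁² = (x+ỹ₃)·ỹ₂² has ỹ₁ = ỹ₂ = 0. -/
theorem stmt_15 (K : Type*) [RCLike K]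
    (a : ℕ → K)
    (ha : ∀ n, a n = (∏ i ∈ Finset.range n, ((1 : K) / 2 - (i : K))) / (n.factorial : K)) :
    (∀ c : ℕ,
      MvPowerSeries.X 0 *
          (MvPowerSeries.X 0 ^ c
            + ∑ n ∈ Finset.Icc 1 c,
                MvPowerSeries.C (σ := Fin 2) (R := K) (a n)
                  * MvPowerSeries.X 0 ^ (c - n) * MvPowerSeries.X 1 ^ n) ^ 2
        - (MvPowerSeries.X 0 + MvPowerSeries.X 1) * (MvPowerSeries.X 0 ^ c) ^ 2
        ∈ (Ideal.span {(MvPowerSeries.X 1 : MvPowerSeries (Fin 2) K)}) ^ c)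
    ∧
    (∀ y₁ y₂ y₃ : MvPowerSeries (Fin 2) K,
      y₃ - MvPowerSeries.X 1
          ∈ (Ideal.span {(MvPowerSeries.X 1 : MvPowerSeries (Fin 2) K)}) ^ 2 →
      MvPowerSeries.X 0 * y₁ ^ 2 = (MvPowerSeries.X 0 + y₃) * y₂ ^ 2 →
      y₁ = 0 ∧ y₂ = 0) := by
  constructor
  · intro c
    rw [Ideal.span_singleton_pow, Ideal.mem_span_singleton]
    have ha0 : a 0 = 1 := by simp [ha 0]
    have hy : (MvPowerSeries.X 0 : MvPowerSeries (Fin 2) K) ^ c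
        + ∑ n ∈ Finset.Icc 1 c, MvPowerSeries.C (σ := Fin 2) (R := K) (a n)
            * MvPowerSeries.X 0 ^ (c - n) * MvPowerSeries.X 1 ^ n
        = ∑ n ∈ range (c + 1), MvPowerSeries.C (σ := Fin 2) (R := K) (a n)
            * MvPowerSeries.X 0 ^ (c - n) * MvPowerSeries.X 1 ^ n := by
      rw [Finset.range_eq_Ico, Finset.sum_eq_sum_Ico_succ_bot (Nat.succ_pos c),
        Nat.succ_eq_add_one, Finset.Ico_add_one_right_eq_Icc]
      simp only [ha0, map_one, one_mul, Nat.sub_zero, pow_zero, mul_one]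
    rw [hy]
    exact stmt15_part1 K a ha (stmt15_T K a ha) c
  · intro y₁ y₂ y₃ h3 heq
    exact stmt15_part2 K y₁ y₂ y₃ h3 heq
end
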